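/- Let η₁, …, η_r be orthonormal vectors in a real Hilbert space H, let Φ be an n-dimensional subspace of H, let p = min{n, r}, suppose P_Φ η₁, …, P_Φ η_p are linearly independent, and let q₁, …, q_p be their Gram–Schmidt orthonormalization. Then for all indices 1 ≤ j ≤ k ≤ p, d_F(span{q_j, …, q_k}, span{η_j, …, η_k})² ≤ d_F(span{η₁, …, η_{j−1}}, Φ)² + d_F(span{η₁, …, η_k}, Φ)² (with span{η₁, …, η₀} = {0} when j = 1). -/

import Mathlib

open scoped RealInnerProductSpace ENNReal
open Submodule Filter

noncomputable section

variable {H : Type*} [NormedAddCommGroup H] [InnerProductSpace ℝ H] [CompleteSpace H]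

/-- Orthogonal projection onto `U`, as an operator `H → H` (defined to be `0` in the
degenerate case where `U` admits no orthogonal projection). -/
noncomputable def proj (U : Submodule ℝ H) : H →L[ℝ] H := by
  classical
  exact if h : HasOrthogonalProjection U then
    (haveI := h; U.subtypeL ∘L orthogonalProjection U)
  else 0

/-- Squared Hilbert–Schmidt norm of an operator, computed in a fixed Hilbert basis of `H`. -/
noncomputable def hsNormSq (A : H →L[ℝ] H) : ℝ≥0∞ :=
  ∑' i : (exists_hilbertBasis ℝ H).choose,
    (‖A ((exists_hilbertBasis ℝ H).choose_spec.choose i)‖₊ : ℝ≥0∞) ^ 2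

/-- Hilbert–Schmidt (Frobenius) norm of an operator. -/
noncomputable def hsNorm (A : H →L[ℝ] H) : ℝ := Real.sqrt (hsNormSq A).toReal

/-- Projection distance `d_F(U, W) = ‖P_{Wᗮ} P_U‖_F`. -/
noncomputable def dF (U W : Submodule ℝ H) : ℝ := hsNorm ((proj Wᗮ) ∘L (proj U))

/-- Gap distance `d₂(U, W) = ‖P_{Wᗮ} P_U‖₂`. -/
noncomputable def d2 (U W : Submodule ℝ H) : ℝ := ‖(proj Wᗮ) ∘L (proj U)‖

/-!
The vectors `q_i` lie in `Φ`, `P_Φ η_m` lies in `span{q_1, …, q_m}`, and `q_i ⟂ η_m` for `m < i`: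
once `q` is identified with Mathlib's `gramSchmidtNormed`, these are standard properties of the
Gram–Schmidt process. For orthonormal families `u`, `w` the quantity
`d_F(span u, span w)² = #u - ∑ ⟪u_a, w_b⟫²` is symmetric when `#u = #w`.
Put `V = span{η_j, …, η_k}`, `W = span{η_1, …, η_k}` and `Q = span{q_1, …, q_k}`. For `i ≥ j`,
`q_i ⟂ η_1, …, η_{j-1}` gives `‖P_{V⊥} q_i‖ = ‖P_{W⊥} q_i‖`, hence
`d_F(span{q_j, …, q_k}, V)² ≤ d_F(Q, W)² = d_F(W, Q)² = d_F(W, Φ)²`; the last equality holds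
because `Q ⊆ Φ` contains `P_Φ η_m`, so `P_Q η_m = P_Φ η_m` for `m ≤ k`.
-/

open Set InnerProductSpace

section

variable {E : Type*} [NormedAddCommGroup E] [InnerProductSpace ℝ E]

lemma proj_eq_starProjection (U : Submodule ℝ E) [h : U.HasOrthogonalProjection] :
    proj U = U.starProjection := by
  rw [proj, dif_pos h]
  rfl

instance finiteDimensional_span_of_finite {s : Set E} [Finite s] :
    FiniteDimensional ℝ (span ℝ s) :=
  FiniteDimensional.span_of_finite ℝ (toFinite s)

lemma inner_starProjection_of_mem (K : Submodule ℝ E) [K.HasOrthogonalProjection] {y : E}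
    (hy : y ∈ K) (x : E) : ⟪y, K.starProjection x⟫ = ⟪y, x⟫ := by
  rw [← inner_starProjection_left_eq_right, starProjection_eq_self_iff.2 hy]

lemma starProjection_eq_of_le {K L : Submodule ℝ E} [K.HasOrthogonalProjection]
    [L.HasOrthogonalProjection] (hKL : K ≤ L) {x : E} (hx : L.starProjection x ∈ K) :
    K.starProjection x = L.starProjection x :=
  eq_starProjection_of_mem_orthogonal hx (orthogonal_le hKL (sub_starProjection_mem_orthogonal x))

section

variable {ι : Type*} [Fintype ι] {e : ι → E}

lemma starProjection_span_range_apply (he : Orthonormal ℝ e) (x : E) :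
    (span ℝ (range e)).starProjection x = ∑ i, ⟪e i, x⟫ • e i := by
  refine eq_starProjection_of_mem_orthogonal
    (sum_mem fun i _ => smul_mem _ _ (subset_span (mem_range_self i))) ?_
  have hortho : span ℝ (range e) ⟂ span ℝ {x - ∑ i, ⟪e i, x⟫ • e i} := by
    rw [isOrtho_span]
    rintro _ ⟨j, rfl⟩ _ rfl
    rw [inner_sub_right, he.inner_right_fintype, sub_self]
  exact hortho.ge (mem_span_singleton_self _)

lemma norm_starProjection_span_range_sq (he : Orthonormal ℝ e) (x : E) :
    ‖(span ℝ (range e)).starProjection x‖ ^ 2 = ∑ i, ⟪e i, x⟫ ^ 2 := by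
  rw [starProjection_span_range_apply he, ← real_inner_self_eq_norm_sq, he.inner_sum]
  simp only [conj_trivial, sq]

lemma norm_starProjection_orthogonal_span_range_sq (he : Orthonormal ℝ e) (x : E) :
    ‖(span ℝ (range e))ᗮ.starProjection x‖ ^ 2 = ‖x‖ ^ 2 - ∑ i, ⟪e i, x⟫ ^ 2 := by
  rw [norm_sq_eq_add_norm_sq_starProjection x (span ℝ (range e)),
    norm_starProjection_span_range_sq he, add_sub_cancel_left]

lemma hasSum_norm_sq_comp_starProjection_span_range {κ F : Type*} [NormedAddCommGroup F]
    [InnerProductSpace ℝ F] (b : HilbertBasis κ ℝ E) (he : Orthonormal ℝ e) (B : E →L[ℝ] F) :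
    HasSum (fun i => ‖B ((span ℝ (range e)).starProjection (b i))‖ ^ 2) (∑ s, ‖B (e s)‖ ^ 2) := by
  have hexpand : ∀ x, ‖B ((span ℝ (range e)).starProjection x)‖ ^ 2 =
      ∑ s, ∑ t, (⟪e s, x⟫ * ⟪x, e t⟫) * ⟪B (e s), B (e t)⟫ := by
    intro x
    simp only [starProjection_span_range_apply he, map_sum, map_smul, ← real_inner_self_eq_norm_sq,
      sum_inner, inner_sum, real_inner_smul_left, real_inner_smul_right, real_inner_comm x]
    exact Finset.sum_congr rfl fun s _ => Finset.sum_congr rfl fun t _ => by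
      rw [real_inner_comm (B (e t))]; ring
  have hdiag : ∑ s, ∑ t, ⟪e s, e t⟫ * ⟪B (e s), B (e t)⟫ = ∑ s, ‖B (e s)‖ ^ 2 := by
    classical
    simp [orthonormal_iff_ite.mp he]
  rw [← hdiag]
  simp only [hexpand]
  exact hasSum_sum fun s _ => hasSum_sum fun t _ =>
    (b.hasSum_inner_mul_inner (e s) (e t)).mul_right _

end

lemma norm_proj_orthogonal_span_image_sq {α : Type*} {s : Finset α} {e : α → E}
    (he : Orthonormal ℝ (fun i : s => e i)) (x : E) :
    ‖proj (span ℝ (e '' s))ᗮ x‖ ^ 2 = ‖x‖ ^ 2 - ∑ i ∈ s, ⟪e i, x⟫ ^ 2 := by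
  rw [image_eq_range, proj_eq_starProjection]
  exact (norm_starProjection_orthogonal_span_range_sq he x).trans
    (by rw [Finset.sum_coe_sort s fun i => ⟪e i, x⟫ ^ 2])

section

variable {ι : Type*} [LinearOrder ι] [LocallyFiniteOrderBot ι] [WellFoundedLT ι]

lemma gramSchmidt_eq_sub_sum_inner_gramSchmidtNormed (f : ι → E) (n : ι) :
    gramSchmidt ℝ f n =
      f n - ∑ i ∈ Finset.Iio n, ⟪gramSchmidtNormed ℝ f i, f n⟫ • gramSchmidtNormed ℝ f i := by
  rw [gramSchmidt_def]
  congr 1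
  refine Finset.sum_congr rfl fun i _ => ?_
  rw [starProjection_singleton, gramSchmidtNormed, real_inner_smul_left, smul_smul]
  congr 1
  simp only [RCLike.ofReal_real_eq_id, id]
  ring

lemma gramSchmidtNormed_mem {K : Submodule ℝ E} {f : ι → E} (hf : ∀ i, f i ∈ K) (n : ι) :
    gramSchmidtNormed ℝ f n ∈ K :=
  smul_mem _ _ (span_le.2 (image_subset_iff.2 fun i _ => hf i) (gramSchmidt_mem_span ℝ f le_rfl))

lemma orthonormal_gramSchmidtNormed_restrict {f : ι → E} {s : Finset ι}
    (hf : ∀ i ∈ s, LinearIndependent ℝ (f ∘ ((↑) : Iic i → ι))) :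
    Orthonormal ℝ (fun i : s => gramSchmidtNormed ℝ f i) := by
  have hne : ∀ i : s, gramSchmidtNormed ℝ f i ≠ 0 := fun i =>
    norm_ne_zero_iff.1 (by rw [gramSchmidtNormed_unit_length_coe _ (hf i i.2)]; exact one_ne_zero)
  exact (gramSchmidtNormed_orthonormal' f).comp (fun i : s => ⟨i, hne i⟩)
    fun a b h => Subtype.ext (congrArg Subtype.val h :)

lemma mem_span_gramSchmidtNormed_image (f : ι → E) {i : ι} {s : Set ι} (hs : Iic i ⊆ s) :
    f i ∈ span ℝ (gramSchmidtNormed ℝ f '' s) := by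
  rw [span_gramSchmidtNormed]
  exact span_mono (image_mono hs) (mem_span_gramSchmidt ℝ f le_rfl)

lemma inner_gramSchmidtNormed_eq_zero_of_lt (f : ι → E) {i j : ι} (hij : i < j) :
    ⟪gramSchmidtNormed ℝ f j, f i⟫ = 0 := by
  rw [gramSchmidtNormed, real_inner_smul_left, gramSchmidt_inv_triangular ℝ f hij, mul_zero]

lemma gramSchmidtNormed_starProjection_mem (Φ : Submodule ℝ E) [Φ.HasOrthogonalProjection]
    (ζ : ι → E) (j : ι) : gramSchmidtNormed ℝ (fun l => Φ.starProjection (ζ l)) j ∈ Φ :=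
  gramSchmidtNormed_mem (fun l => starProjection_apply_mem Φ (ζ l)) j

lemma inner_gramSchmidtNormed_starProjection_eq_zero_of_lt (Φ : Submodule ℝ E)
    [Φ.HasOrthogonalProjection] (ζ : ι → E) {i j : ι} (hij : i < j) :
    ⟪gramSchmidtNormed ℝ (fun l => Φ.starProjection (ζ l)) j, ζ i⟫ = 0 := by
  rw [← inner_starProjection_of_mem Φ (gramSchmidtNormed_starProjection_mem Φ ζ j)]
  exact inner_gramSchmidtNormed_eq_zero_of_lt _ hij

end

lemma orthonormal_gramSchmidtNormed_comp_succ {f : ℕ → E} {p k : ℕ}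
    (hf : LinearIndependent ℝ (fun i : Icc 1 p => f i)) (hk : k ≤ p) :
    Orthonormal ℝ (fun l : Finset.Ico 0 k => gramSchmidtNormed ℝ (fun l => f (l + 1)) l) := by
  refine orthonormal_gramSchmidtNormed_restrict fun l hl => hf.comp
    (fun i : Iic l => ⟨i + 1, le_add_self, ?_⟩)
    fun a b h => Subtype.ext (by simpa using congrArg Subtype.val h)
  have := mem_Iic.1 i.2
  have := Finset.mem_Ico.1 hl
  omega

lemma orthonormal_comp_succ_of_inner_eq_ite {e : ℕ → E} {r k : ℕ}
    (he : ∀ i ∈ Icc 1 r, ∀ j ∈ Icc 1 r, ⟪e i, e j⟫ = if i = j then (1 : ℝ) else 0)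
    (hk : k ≤ r) : Orthonormal ℝ (fun l : Finset.Ico 0 k => e (l + 1)) := by
  refine orthonormal_iff_ite.2 fun a b => ?_
  have ha := Finset.mem_Ico.1 a.2
  have hb := Finset.mem_Ico.1 b.2
  rw [he _ ⟨le_add_self, by omega⟩ _ ⟨le_add_self, by omega⟩]
  exact if_congr ⟨fun h => Subtype.ext (by omega), fun h => by rw [h]⟩ rfl rfl

lemma eq_gramSchmidtNormed_of_recursion {Φ : Submodule ℝ E} [Φ.HasOrthogonalProjection]
    {η q : ℕ → E} {p : ℕ}
    (hq : ∀ i ∈ Icc 1 p,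
      q i = ‖Φ.starProjection (η i) - ∑ l ∈ Finset.Ico 1 i, ⟪q l, η i⟫ • q l‖⁻¹ •
            (Φ.starProjection (η i) - ∑ l ∈ Finset.Ico 1 i, ⟪q l, η i⟫ • q l))
    {i : ℕ} (hi : i < p) :
    q (i + 1) = gramSchmidtNormed ℝ (fun l => Φ.starProjection (η (l + 1))) i := by
  induction i using Nat.strong_induction_on with
  | _ i ih =>
  set v : ℕ → E := fun l => Φ.starProjection (η (l + 1))
  have hsum : ∑ l ∈ Finset.Ico 1 (i + 1), ⟪q l, η (i + 1)⟫ • q l =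
      ∑ l ∈ Finset.Iio i, ⟪gramSchmidtNormed ℝ v l, v i⟫ • gramSchmidtNormed ℝ v l := by
    rw [Finset.sum_Ico_eq_sum_range, Nat.add_sub_cancel, ← Nat.Iio_eq_range]
    refine Finset.sum_congr rfl fun l hl => ?_
    have hl : l < i := Finset.mem_Iio.1 hl
    rw [add_comm 1 l, ih l hl (hl.trans hi),
      inner_starProjection_of_mem Φ (gramSchmidtNormed_starProjection_mem Φ _ l)]
  change q (i + 1) = (‖gramSchmidt ℝ v i‖ : ℝ)⁻¹ • gramSchmidt ℝ v i
  rw [gramSchmidt_eq_sub_sum_inner_gramSchmidtNormed, ← hsum]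
  exact hq (i + 1) ⟨le_add_self, hi⟩

end

lemma image_Icc_eq_image_Ico_succ {β : Type*} (f : ℕ → β) {a : ℕ} (ha : 1 ≤ a) (b : ℕ) :
    f '' Icc a b = (fun l => f (l + 1)) '' Ico (a - 1) b := by
  ext x
  simp only [mem_image, mem_Icc, mem_Ico]
  constructor
  · rintro ⟨i, hi, rfl⟩
    exact ⟨i - 1, by omega, by rw [Nat.sub_add_cancel (by omega)]⟩
  · rintro ⟨l, hl, rfl⟩
    exact ⟨l + 1, by omega, rfl⟩

lemma dF_sq_span_range {ι : Type*} [Fintype ι] {e : ι → H} (he : Orthonormal ℝ e)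
    (W : Submodule ℝ H) :
    dF (span ℝ (range e)) W ^ 2 = ∑ i, ‖proj Wᗮ (e i)‖ ^ 2 := by
  set b := (exists_hilbertBasis ℝ H).choose_spec.choose
  have hsum := hasSum_norm_sq_comp_starProjection_span_range b he (proj Wᗮ)
  have hhs : hsNormSq (proj Wᗮ ∘L proj (span ℝ (range e))) =
      ∑' i, ENNReal.ofReal (‖proj Wᗮ ((span ℝ (range e)).starProjection (b i))‖ ^ 2) := by
    rw [hsNormSq, proj_eq_starProjection (span ℝ (range e))]
    refine tsum_congr fun i => ?_
    rw [← ENNReal.ofReal_coe_nnreal, coe_nnnorm, ← ENNReal.ofReal_pow (norm_nonneg _)]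
    rfl
  rw [dF, hsNorm, Real.sq_sqrt ENNReal.toReal_nonneg, hhs,
    ← ENNReal.ofReal_tsum_of_nonneg (fun i => sq_nonneg _) hsum.summable, hsum.tsum_eq,
    ENNReal.toReal_ofReal (Finset.sum_nonneg fun i _ => sq_nonneg _)]

lemma dF_sq_span_image {α : Type*} {s : Finset α} {e : α → H}
    (he : Orthonormal ℝ (fun i : s => e i)) (W : Submodule ℝ H) :
    dF (span ℝ (e '' s)) W ^ 2 = ∑ i ∈ s, ‖proj Wᗮ (e i)‖ ^ 2 := by
  rw [image_eq_range]
  exact (dF_sq_span_range he W).trans (Finset.sum_coe_sort s fun i => ‖proj Wᗮ (e i)‖ ^ 2)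

lemma dF_nonneg (U W : Submodule ℝ H) : 0 ≤ dF U W := Real.sqrt_nonneg _

lemma dF_sq_span_image_span_image {α β : Type*} {s : Finset α} {t : Finset β} {u : α → H}
    {w : β → H} (hu : Orthonormal ℝ (fun i : s => u i)) (hw : Orthonormal ℝ (fun i : t => w i)) :
    dF (span ℝ (u '' s)) (span ℝ (w '' t)) ^ 2 = s.card - ∑ a ∈ s, ∑ b ∈ t, ⟪w b, u a⟫ ^ 2 := by
  rw [dF_sq_span_image hu, ← nsmul_one s.card, ← Finset.sum_const, ← Finset.sum_sub_distrib]
  refine Finset.sum_congr rfl fun a ha => ?_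
  rw [norm_proj_orthogonal_span_image_sq hw, hu.norm_eq_one ⟨a, ha⟩, one_pow]

lemma dF_span_image_comm {α β : Type*} {s : Finset α} {t : Finset β} {u : α → H} {w : β → H}
    (hu : Orthonormal ℝ (fun i : s => u i)) (hw : Orthonormal ℝ (fun i : t => w i))
    (hst : s.card = t.card) :
    dF (span ℝ (u '' s)) (span ℝ (w '' t)) = dF (span ℝ (w '' t)) (span ℝ (u '' s)) := by
  refine (sq_eq_sq₀ (dF_nonneg _ _) (dF_nonneg _ _)).1 ?_
  rw [dF_sq_span_image_span_image hu hw, dF_sq_span_image_span_image hw hu, hst, Finset.sum_comm]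
  simp only [real_inner_comm]

theorem dF_sq_le_of_triangular {α : Type*} {S T : Finset α} (hTS : T ⊆ S) {e η : α → H}
    (he : Orthonormal ℝ (fun i : S => e i)) (hη : Orthonormal ℝ (fun i : S => η i))
    {Φ : Submodule ℝ H} [Φ.HasOrthogonalProjection] (heΦ : ∀ i ∈ S, e i ∈ Φ)
    (hηe : ∀ m ∈ S, Φ.starProjection (η m) ∈ span ℝ (e '' S))
    (htri : ∀ i ∈ T, ∀ m ∈ S, m ∉ T → ⟪e i, η m⟫ = 0) :
    dF (span ℝ (e '' T)) (span ℝ (η '' T)) ^ 2 ≤ dF (span ℝ (η '' S)) Φ ^ 2 := by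
  have hincl : Function.Injective (fun i : T => (⟨i, hTS i.2⟩ : S)) :=
    fun a b h => Subtype.ext (congrArg Subtype.val h :)
  have heT : Orthonormal ℝ (fun i : T => e i) := he.comp _ hincl
  have hηT : Orthonormal ℝ (fun i : T => η i) := hη.comp _ hincl
  have hproj : ∀ m ∈ S, proj (span ℝ (e '' S))ᗮ (η m) = proj Φᗮ (η m) := by
    intro m hm
    rw [proj_eq_starProjection, proj_eq_starProjection, starProjection_orthogonal_val,
      starProjection_orthogonal_val,
      starProjection_eq_of_le (span_le.2 (image_subset_iff.2 heΦ)) (hηe m hm)]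
  calc dF (span ℝ (e '' T)) (span ℝ (η '' T)) ^ 2
      = ∑ i ∈ T, ‖proj (span ℝ (η '' T))ᗮ (e i)‖ ^ 2 := dF_sq_span_image heT _
    _ = ∑ i ∈ T, ‖proj (span ℝ (η '' S))ᗮ (e i)‖ ^ 2 := by
      refine Finset.sum_congr rfl fun i hi => ?_
      rw [norm_proj_orthogonal_span_image_sq hηT, norm_proj_orthogonal_span_image_sq hη]
      congr 1
      refine Finset.sum_subset hTS fun m hm hmT => ?_
      rw [real_inner_comm, htri i hi m hm hmT, sq, mul_zero]
    _ ≤ ∑ i ∈ S, ‖proj (span ℝ (η '' S))ᗮ (e i)‖ ^ 2 :=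
      Finset.sum_le_sum_of_subset_of_nonneg hTS fun _ _ _ => sq_nonneg _
    _ = dF (span ℝ (η '' S)) (span ℝ (e '' S)) ^ 2 := by
      rw [← dF_span_image_comm he hη rfl, dF_sq_span_image he]
    _ = dF (span ℝ (η '' S)) Φ ^ 2 := by
      rw [dF_sq_span_image hη, dF_sq_span_image hη]
      exact Finset.sum_congr rfl fun m hm => by rw [hproj m hm]

theorem stmt1_general {H : Type*} [NormedAddCommGroup H] [InnerProductSpace ℝ H] [CompleteSpace H]
    (r n : ℕ) (η : ℕ → H)
    (hη : ∀ i ∈ Set.Icc 1 r, ∀ j ∈ Set.Icc 1 r, ⟪η i, η j⟫ = if i = j then (1 : ℝ) else 0)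
    (Φ : Submodule ℝ H) (hΦfd : FiniteDimensional ℝ Φ)
    (hlin : LinearIndependent ℝ (fun i : Set.Icc 1 (min n r) => proj Φ (η i.1)))
    (q : ℕ → H)
    (hq : ∀ i ∈ Set.Icc 1 (min n r),
      q i = ‖proj Φ (η i) - ∑ l ∈ Finset.Ico 1 i, ⟪q l, η i⟫ • q l‖⁻¹ •
            (proj Φ (η i) - ∑ l ∈ Finset.Ico 1 i, ⟪q l, η i⟫ • q l))
    (j k : ℕ) (hj : 1 ≤ j) (hk : k ≤ min n r) :
    dF (span ℝ (q '' Set.Icc j k)) (span ℝ (η '' Set.Icc j k)) ^ 2 ≤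
      dF (span ℝ (η '' Set.Icc 1 (j - 1))) Φ ^ 2 + dF (span ℝ (η '' Set.Icc 1 k)) Φ ^ 2 := by
  simp only [proj_eq_starProjection Φ] at hlin hq
  -- Mathlib's Gram–Schmidt process starts at index `0`, so `q (l + 1)` corresponds to `g l`.
  set g := gramSchmidtNormed ℝ (fun l => Φ.starProjection (η (l + 1)))
  have hqg : q '' Icc j k = g '' ↑(Finset.Ico (j - 1) k) := by
    rw [image_Icc_eq_image_Ico_succ q hj, Finset.coe_Ico]
    exact image_congr fun l hl => eq_gramSchmidtNormed_of_recursion hq (by grind)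
  rw [hqg, image_Icc_eq_image_Ico_succ η hj, image_Icc_eq_image_Ico_succ η le_rfl k,
    ← Finset.coe_Ico, ← Finset.coe_Ico]
  have hg : Orthonormal ℝ (fun l : Finset.Ico 0 k => g l) :=
    orthonormal_gramSchmidtNormed_comp_succ (f := fun i => Φ.starProjection (η i)) hlin hk
  have hη' : Orthonormal ℝ (fun l : Finset.Ico 0 k => η (l + 1)) :=
    orthonormal_comp_succ_of_inner_eq_ite hη (hk.trans (min_le_right n r))
  have hspan : ∀ m ∈ Finset.Ico 0 k, Φ.starProjection (η (m + 1)) ∈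
      span ℝ (g '' ↑(Finset.Ico 0 k)) := by
    intro m hm
    refine mem_span_gramSchmidtNormed_image (fun l => Φ.starProjection (η (l + 1))) fun l hl => ?_
    simp only [Finset.coe_Ico, mem_Ico, mem_Iic, Finset.mem_Ico] at hl hm ⊢
    omega
  have htri : ∀ i ∈ Finset.Ico (j - 1) k, ∀ m ∈ Finset.Ico 0 k, m ∉ Finset.Ico (j - 1) k →
      ⟪g i, η (m + 1)⟫ = 0 := by
    intro i hi m hm hmi
    refine inner_gramSchmidtNormed_starProjection_eq_zero_of_lt Φ (fun l => η (l + 1)) ?_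
    simp only [Finset.mem_Ico] at hi hm hmi
    omega
  exact (dF_sq_le_of_triangular (Finset.Ico_subset_Ico_left (Nat.zero_le _)) hg hη'
    (fun l _ => gramSchmidtNormed_starProjection_mem Φ _ l) hspan htri).trans
    (le_add_of_nonneg_left (sq_nonneg _))

/-- With `q₁, …, q_p` the Gram–Schmidt orthonormalization of the projections
`P_Φ η₁, …, P_Φ η_p` of the orthonormal vectors `η₁, …, η_r` onto the `n`-dimensional subspace
`Φ` (`p = min n r`), for `1 ≤ j ≤ k ≤ p` we have
`d_F(span{q_j..q_k}, span{η_j..η_k})² ≤ d_F(span{η₁..η_{j−1}}, Φ)² + d_F(span{η₁..η_k}, Φ)²`. -/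
theorem stmt1 {H : Type*} [NormedAddCommGroup H] [InnerProductSpace ℝ H] [CompleteSpace H]
    (r n : ℕ) (hr : 1 ≤ r) (η : ℕ → H)
    (hη : ∀ i ∈ Set.Icc 1 r, ∀ j ∈ Set.Icc 1 r, ⟪η i, η j⟫ = if i = j then (1 : ℝ) else 0)
    (Φ : Submodule ℝ H) (hΦfd : FiniteDimensional ℝ Φ) (hΦn : Module.finrank ℝ Φ = n)
    (hlin : LinearIndependent ℝ (fun i : Set.Icc 1 (min n r) => proj Φ (η i.1)))
    (q : ℕ → H)
    (hq : ∀ i ∈ Set.Icc 1 (min n r),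
      q i = ‖proj Φ (η i) - ∑ l ∈ Finset.Ico 1 i, ⟪q l, η i⟫ • q l‖⁻¹ •
            (proj Φ (η i) - ∑ l ∈ Finset.Ico 1 i, ⟪q l, η i⟫ • q l))
    (j k : ℕ) (hj : 1 ≤ j) (hjk : j ≤ k) (hk : k ≤ min n r) :
    dF (span ℝ (q '' Set.Icc j k)) (span ℝ (η '' Set.Icc j k)) ^ 2 ≤
      dF (span ℝ (η '' Set.Icc 1 (j - 1))) Φ ^ 2 + dF (span ℝ (η '' Set.Icc 1 k)) Φ ^ 2 :=
  stmt1_general r n η hη Φ hΦfd hlin q hq j k hj hk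

end
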